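/- arXiv:2507.03340 — 7 statements merged into one kernel-verified Lean document; each statement's English description precedes it below -/
import Mathlib

section
/- Let H be a complex Hilbert space, let A, B, S : H →L[ℂ] H be bounded operators with A self-adjoint, S self-adjoint, positive, and invertible, and S ∘ S = B. Let t > 0. If both t·B − A and t·B + A are positive operators (i.e., −t·B ≤ A ≤ t·B in the Loewner order), then ‖S⁻¹ ∘ A ∘ S⁻¹‖ ≤ t. -/
/-!
Conjugating `-t • B ≤ A ≤ t • B` by the self-adjoint operator `S⁻¹` turns it into
`-t ≤ S⁻¹ A S⁻¹ ≤ t`, since `S⁻¹ B S⁻¹ = 1`. An operator squeezed between `-t` and `t`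
has all Rayleigh quotients in `[-t, t]`, and its norm is the supremum of their absolute values.
-/

theorem IsSelfAdjoint.of_mul_eq_one {M : Type*} [Monoid M] [StarMul M] {a b : M}
    (ha : IsSelfAdjoint a) (h : a * b = 1) : IsSelfAdjoint b :=
  left_inv_eq_right_inv (by rw [← ha.star_eq, ← star_mul, h, star_one]) h

theorem IsSelfAdjoint.mul_eq_one_comm {M : Type*} [Monoid M] [StarMul M] {a b : M}
    (ha : IsSelfAdjoint a) (h : a * b = 1) : b * a = 1 := by
  simpa [(ha.of_mul_eq_one h).star_eq, ha.star_eq] using congrArg star h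

namespace ContinuousLinearMap

variable {𝕜 E : Type*} [RCLike 𝕜] [NormedAddCommGroup E] [InnerProductSpace 𝕜 E]

theorem abs_re_inner_le_of_isPositive_smul_one_sub_of_isPositive_smul_one_add {T : E →L[𝕜] E}
    {t : ℝ} (h₁ : ((t : 𝕜) • 1 - T).IsPositive) (h₂ : ((t : 𝕜) • 1 + T).IsPositive) (x : E) :
    |RCLike.re (inner 𝕜 (T x) x)| ≤ t * ‖x‖ ^ 2 := by
  have e₁ := h₁.re_inner_nonneg_left x
  have e₂ := h₂.re_inner_nonneg_left x
  simp only [sub_apply, add_apply, smul_apply, one_apply_eq_self, inner_sub_left, inner_add_left,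
    inner_smul_left, RCLike.conj_ofReal, map_sub, map_add, RCLike.re_ofReal_mul,
    inner_self_eq_norm_sq] at e₁ e₂
  exact abs_le.mpr ⟨by linarith, by linarith⟩

theorem norm_le_of_isPositive_smul_one_sub_of_isPositive_smul_one_add {T : E →L[𝕜] E} {t : ℝ}
    (ht : 0 ≤ t) (h₁ : ((t : 𝕜) • 1 - T).IsPositive) (h₂ : ((t : 𝕜) • 1 + T).IsPositive) :
    ‖T‖ ≤ t := by
  have hT : T.IsSymmetric := by
    simpa using h₂.isSymmetric.sub (isPositive_one.isSymmetric.smul (RCLike.conj_ofReal t))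
  rw [T.norm_eq_iSup_rayleighQuotient hT]
  refine ciSup_le fun x => ?_
  rcases eq_or_ne x 0 with rfl | hx
  · simpa using ht
  rw [rayleighQuotient, reApplyInnerSelf_apply, abs_div, abs_sq, div_le_iff₀ (by positivity)]
  exact abs_re_inner_le_of_isPositive_smul_one_sub_of_isPositive_smul_one_add h₁ h₂ x

end ContinuousLinearMap

theorem stmt1_general {H : Type*} [NormedAddCommGroup H] [InnerProductSpace ℂ H] [CompleteSpace H]
    (A B S Sinv : H →L[ℂ] H) (hSsa : IsSelfAdjoint S) (hinv1 : S ∘L Sinv = 1)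
    (hSB : S ∘L S = B) (t : ℝ) (ht : 0 < t)
    (h1 : (t • B - A).IsPositive) (h2 : (t • B + A).IsPositive) :
    ‖Sinv ∘L A ∘L Sinv‖ ≤ t := by
  have hSinv : ContinuousLinearMap.adjoint Sinv = Sinv := (hSsa.of_mul_eq_one hinv1).adjoint_eq
  have hB : Sinv ∘L B ∘L Sinv = 1 := by
    rw [← hSB, ContinuousLinearMap.comp_assoc, hinv1]
    exact hSsa.mul_eq_one_comm hinv1
  have hSub := h1.conj_adjoint Sinv
  have hAdd := h2.conj_adjoint Sinv
  simp only [hSinv, ContinuousLinearMap.sub_comp, ContinuousLinearMap.add_comp,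
    ContinuousLinearMap.comp_sub, ContinuousLinearMap.comp_add, ContinuousLinearMap.smul_comp,
    ContinuousLinearMap.comp_smul, hB, ← Complex.coe_smul] at hSub hAdd
  exact ContinuousLinearMap.norm_le_of_isPositive_smul_one_sub_of_isPositive_smul_one_add
    ht.le hSub hAdd

/-- Converse implication of the `equivalently` claim in Lemma A.2:
if `−t·B ≤ A ≤ t·B` in the Loewner order, where `S = B^{1/2}` is positive, self-adjoint
and invertible with `S ∘ S = B`, then `‖S⁻¹ ∘ A ∘ S⁻¹‖ ≤ t`. -/
theorem stmt1 {H : Type*} [NormedAddCommGroup H] [InnerProductSpace ℂ H] [CompleteSpace H]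
    (A B S Sinv : H →L[ℂ] H) (hA : IsSelfAdjoint A) (hSsa : IsSelfAdjoint S)
    (hSpos : S.IsPositive) (hinv1 : S ∘L Sinv = 1) (hinv2 : Sinv ∘L S = 1)
    (hSB : S ∘L S = B) (t : ℝ) (ht : 0 < t)
    (h1 : (t • B - A).IsPositive) (h2 : (t • B + A).IsPositive) :
    ‖Sinv ∘L A ∘L Sinv‖ ≤ t :=
  stmt1_general A B S Sinv hSsa hinv1 hSB t ht h1 h2
end

section
/- Let N > 0 and t ∈ (0, 3] be real numbers, let δ ∈ (0, 1), and let M be a natural number with M ≥ 1 and (M : ℝ) ≥ (4N/t²)·log(64N/(δ t²)). Then 2N·(1 + 6/(t²·(log(1 + M·t/N))²))·exp(−(M·t²/2)/(N·(1 + t/3))) ≤ δ. -/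
open Real

set_option maxHeartbeats 1000000 in
/-- Quantitative core of Lemma A.2: with
`M ≥ (4N/t²)·log(64N/(δt²))`, the tail bound of Bach's concentration lemma at level `t`
is at most `δ`. -/
theorem stmt2 (N t δ : ℝ) (M : ℕ) (hN : 0 < N) (ht : t ∈ Set.Ioc (0 : ℝ) 3)
    (hδ : δ ∈ Set.Ioo (0 : ℝ) 1) (hM1 : 1 ≤ M)
    (hM : 4 * N / t ^ 2 * Real.log (64 * N / (δ * t ^ 2)) ≤ (M : ℝ)) :
    2 * N * (1 + 6 / (t ^ 2 * (Real.log (1 + (M : ℝ) * t / N)) ^ 2)) *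
        Real.exp (-((M : ℝ) * t ^ 2 / 2) / (N * (1 + t / 3))) ≤ δ := by
  obtain ⟨ht0, ht3⟩ := ht
  obtain ⟨hδ0, hδ1⟩ := hδ
  have hM1' : (1:ℝ) ≤ (M:ℝ) := by exact_mod_cast hM1
  have hMpos : (0:ℝ) < (M:ℝ) := by linarith
  have ht2 : (0:ℝ) < t ^ 2 := by positivity
  have hA : (0:ℝ) < 64 * N / (δ * t ^ 2) := by positivity
  -- clear the division in hM
  have hK : Real.log (64 * N / (δ * t ^ 2)) * (4 * N) ≤ (M:ℝ) * t ^ 2 := by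
    rw [div_mul_eq_mul_div, div_le_iff₀ ht2] at hM
    nlinarith
  -- Step 1 : Mt/N ≥ 1
  have hMtN : (1:ℝ) ≤ (M:ℝ) * t / N := by
    rcases le_or_gt N t with h | h
    · rw [le_div_iff₀ hN]
      nlinarith
    · have he : Real.exp 1 < 2.7182818286 := Real.exp_one_lt_d9
      have hep := Real.exp_pos 1
      have h3 : Real.exp 3 ≤ (2.7182818286:ℝ) ^ 3 := by
        rw [show (3:ℝ) = 1 + 1 + 1 by norm_num, Real.exp_add, Real.exp_add]
        nlinarith
      have hc : Real.exp 3 ≤ 20.09 := by nlinarith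
      have hAx : Real.exp 3 ≤ 64 * N / (δ * t ^ 2) := by
        rw [le_div_iff₀ (by positivity)]
        have h1 : δ * t ^ 2 < 3 * N := by nlinarith
        have h2 := mul_le_mul_of_nonneg_right hc (le_of_lt (mul_pos hδ0 ht2))
        linarith
      have hlog : (3:ℝ) ≤ Real.log (64 * N / (δ * t ^ 2)) :=
        (Real.le_log_iff_exp_le hA).mpr hAx
      have h12 : 12 * N ≤ (M:ℝ) * t ^ 2 := by
        nlinarith [mul_le_mul_of_nonneg_right hlog (by positivity : (0:ℝ) ≤ 4 * N)]
      rw [le_div_iff₀ hN]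
      nlinarith [mul_pos hMpos ht0,
        mul_le_mul_of_nonneg_left ht3 (le_of_lt (mul_pos hMpos ht0))]
  set L := Real.log (1 + (M:ℝ) * t / N) with hLdef
  have hL : Real.log 2 ≤ L := by
    rw [hLdef]
    apply Real.log_le_log (by norm_num)
    linarith
  have hlog2 : (0.6931471803:ℝ) < Real.log 2 := Real.log_two_gt_d9
  have hL0 : (0:ℝ) < L := by linarith
  have hL2 : (0.48:ℝ) ≤ L ^ 2 := by nlinarith
  -- Step 2 : exponential bound
  have hexp : Real.exp (-((M:ℝ) * t ^ 2 / 2) / (N * (1 + t / 3))) ≤ δ * t ^ 2 / (64 * N) := by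
    have hden : 0 < N * (1 + t / 3) := by nlinarith
    have hx : Real.log (64 * N / (δ * t ^ 2)) ≤ ((M:ℝ) * t ^ 2 / 2) / (N * (1 + t / 3)) := by
      rw [le_div_iff₀ hden]
      rcases le_or_gt 0 (Real.log (64 * N / (δ * t ^ 2))) with hs | hs
      · nlinarith [mul_le_mul_of_nonneg_left
          (show N * (1 + t / 3) ≤ 2 * N by nlinarith) hs]
      · have h1 : Real.log (64 * N / (δ * t ^ 2)) * (N * (1 + t / 3)) < 0 :=
          mul_neg_of_neg_of_pos hs hden
        nlinarith [mul_pos hMpos ht2]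
    calc Real.exp (-((M:ℝ) * t ^ 2 / 2) / (N * (1 + t / 3)))
        ≤ Real.exp (-Real.log (64 * N / (δ * t ^ 2))) := by
          apply Real.exp_le_exp.mpr
          rw [neg_div]
          linarith
      _ = δ * t ^ 2 / (64 * N) := by
          rw [Real.exp_neg, Real.exp_log hA, inv_div]
  -- Step 3 : combine
  have hC : (0:ℝ) ≤ 2 * N * (1 + 6 / (t ^ 2 * L ^ 2)) := by positivity
  have hmain := mul_le_mul_of_nonneg_left hexp hC
  have heq : 2 * N * (1 + 6 / (t ^ 2 * L ^ 2)) * (δ * t ^ 2 / (64 * N))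
      = δ * (t ^ 2 + 6 / L ^ 2) / 32 := by
    field_simp
    ring
  have h6 : 6 / L ^ 2 ≤ 6 / 0.48 :=
    div_le_div_of_nonneg_left (by norm_num) (by norm_num) hL2
  have hfin : δ * (t ^ 2 + 6 / L ^ 2) / 32 ≤ δ := by
    rw [div_le_iff₀ (by norm_num : (0:ℝ) < 32)]
    have h65 : (6:ℝ) / 0.48 = 12.5 := by norm_num
    have hsum : t ^ 2 + 6 / L ^ 2 ≤ 32 := by nlinarith
    nlinarith [mul_le_mul_of_nonneg_left hsum hδ0.le]
  calc 2 * N * (1 + 6 / (t ^ 2 * L ^ 2)) * Real.exp (-((M:ℝ) * t ^ 2 / 2) / (N * (1 + t / 3)))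
      ≤ 2 * N * (1 + 6 / (t ^ 2 * L ^ 2)) * (δ * t ^ 2 / (64 * N)) := hmain
    _ = δ * (t ^ 2 + 6 / L ^ 2) / 32 := heq
    _ ≤ δ := hfin
end

section
/- Let H be a complex Hilbert space, let A, B : H →L[ℂ] H with A self-adjoint and B positive and invertible, let t ≥ 0 and α ∈ [0, 1/2]. If ‖B^{−1/2} ∘ A ∘ B^{−1/2}‖ ≤ t, then ‖B^{−α} ∘ A ∘ A ∘ B^{−α}‖ ≤ t² · ‖B‖^{2(1−α)}, where B^{r} denotes the fractional power of B given by the continuous functional calculus. -/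
/-- Bound `‖B^{−α} ∘ A ∘ A ∘ B^{−α}‖ ≤ t² ‖B‖^{2(1−α)}` from the proof of Theorem 3.1(ii),
where `B^r = cfc (· ^ r) B` is the fractional power of the positive invertible operator `B`
given by the continuous functional calculus. -/
theorem stmt6 {H : Type*} [NormedAddCommGroup H] [InnerProductSpace ℂ H] [CompleteSpace H]
    (A B : H →L[ℂ] H) (hA : IsSelfAdjoint A) (hB : B.IsPositive) (hBinv : IsUnit B)
    (t : ℝ) (ht : 0 ≤ t) (α : ℝ) (hα : α ∈ Set.Icc (0 : ℝ) (1 / 2))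
    (hnorm : ‖cfc (fun x : ℝ => x ^ (-(1 : ℝ) / 2)) B ∘L A ∘L
        cfc (fun x : ℝ => x ^ (-(1 : ℝ) / 2)) B‖ ≤ t) :
    ‖cfc (fun x : ℝ => x ^ (-α)) B ∘L A ∘L A ∘L cfc (fun x : ℝ => x ^ (-α)) B‖ ≤
      t ^ 2 * ‖B‖ ^ (2 * (1 - α)) := by
  obtain ⟨hα0, hα2⟩ := hα
  rcases subsingleton_or_nontrivial H with hH | hH
  · have : Subsingleton (H →L[ℂ] H) := inferInstance
    rw [Subsingleton.elim (cfc (fun x : ℝ => x ^ (-α)) B ∘L A ∘L A ∘L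
      cfc (fun x : ℝ => x ^ (-α)) B) 0, norm_zero]
    positivity
  · have hBsa : IsSelfAdjoint B := hB.isSelfAdjoint
    have hBnn : 0 ≤ B := (ContinuousLinearMap.nonneg_iff_isPositive B).mpr hB
    have hspec : ∀ x ∈ spectrum ℝ B, 0 < x := by
      intro x hx
      refine lt_of_le_of_ne (spectrum_nonneg_of_nonneg hBnn hx) ?_
      rintro rfl
      exact spectrum.zero_notMem ℝ hBinv hx
    have hle : ∀ x ∈ spectrum ℝ B, x ≤ ‖B‖ := fun x hx =>
      (Real.le_norm_self x).trans (spectrum.norm_le_norm_of_mem hx)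
    have hcont : ∀ r : ℝ, ContinuousOn (fun x : ℝ => x ^ r) (spectrum ℝ B) := fun r =>
      ContinuousOn.rpow_const continuousOn_id (fun x hx => Or.inl (hspec x hx).ne')
    -- general multiplication rule for powers
    have hmul : ∀ r s : ℝ, cfc (fun x : ℝ => x ^ r) B * cfc (fun x : ℝ => x ^ s) B
        = cfc (fun x : ℝ => x ^ (r + s)) B := by
      intro r s
      rw [← cfc_mul _ _ B (hcont r) (hcont s)]
      exact cfc_congr fun x hx => (Real.rpow_add (hspec x hx) r s).symm
    set P := cfc (fun x : ℝ => x ^ (-(1 : ℝ) / 2)) B with hP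
    set Q := cfc (fun x : ℝ => x ^ ((1 : ℝ) / 2 - α)) B with hQ
    set Pα := cfc (fun x : ℝ => x ^ (-α)) B with hPα
    have hB1 : cfc (fun x : ℝ => x ^ (1 : ℝ)) B = B := by
      rw [show (fun x : ℝ => x ^ (1 : ℝ)) = id from funext fun x => Real.rpow_one x]
      exact cfc_id ℝ B
    have hsplit : Pα = Q * P := by
      rw [hQ, hP, hmul]
      exact cfc_congr fun x hx => by congr 1; ring
    have hsplit' : Pα = P * Q := by
      rw [hQ, hP, hmul]
      exact cfc_congr fun x hx => by congr 1; ring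
    have hPBP : P * (B * P) = 1 := by
      rw [← hB1, ← mul_assoc, hP, hmul, hmul]
      rw [show (-(1:ℝ)/2 + 1 + -(1:ℝ)/2) = 0 by norm_num]
      rw [show (fun x : ℝ => x ^ (0:ℝ)) = (fun _ => (1:ℝ)) from funext fun x => Real.rpow_zero x]
      exact cfc_const_one ℝ B
    have hPBP' : ∀ Y : H →L[ℂ] H, P * (B * (P * Y)) = Y := fun Y => by
      rw [show P * (B * (P * Y)) = (P * (B * P)) * Y by simp only [mul_assoc], hPBP, one_mul]
    set C := P * A * P with hC
    have hkey : Pα * A * A * Pα = Q * (C * (B * (C * Q))) := by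
      nth_rewrite 2 [hsplit']
      rw [hsplit, hC]
      simp only [mul_assoc]
      rw [hPBP' (A * (P * Q))]
    have hCt : ‖C‖ ≤ t := hnorm
    have hQn : ‖Q‖ ≤ ‖B‖ ^ ((1 : ℝ) / 2 - α) := by
      apply norm_cfc_le (Real.rpow_nonneg (norm_nonneg B) _)
      intro x hx
      rw [Real.norm_of_nonneg (Real.rpow_nonneg (hspec x hx).le _)]
      exact Real.rpow_le_rpow (hspec x hx).le (hle x hx) (by linarith)
    have hBpos : (0 : ℝ) < ‖B‖ := by
      have : B ≠ 0 := hBinv.ne_zero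
      simpa [norm_pos_iff] using this
    have hX : Pα ∘L A ∘L A ∘L Pα = Q * (C * (B * (C * Q))) := hkey
    rw [hX]
    calc ‖Q * (C * (B * (C * Q)))‖
        ≤ ‖Q‖ * (‖C‖ * (‖B‖ * (‖C‖ * ‖Q‖))) := by
          refine (norm_mul_le _ _).trans ?_
          gcongr
          refine (norm_mul_le _ _).trans ?_
          gcongr
          refine (norm_mul_le _ _).trans ?_
          gcongr
          exact norm_mul_le _ _
      _ ≤ (‖B‖ ^ ((1:ℝ)/2 - α)) * (t * (‖B‖ * (t * (‖B‖ ^ ((1:ℝ)/2 - α))))) := by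
          gcongr <;> first | exact norm_nonneg _ | positivity
      _ = t ^ 2 * ‖B‖ ^ (2 * (1 - α)) := by
          rw [show (2 * (1 - α)) = ((1:ℝ)/2 - α) + 1 + ((1:ℝ)/2 - α) by ring,
            Real.rpow_add hBpos, Real.rpow_add hBpos, Real.rpow_one]
          ring
end

section
/- Let H be a complex Hilbert space, let Σ, Σ̂ : H →L[ℂ] H be self-adjoint operators with Σ positive, let λ > 0, t > 0, and α ∈ [0, 1/2], and set B := Σ + λ·1 (a positive invertible operator). If ‖B^{−1/2} ∘ (Σ − Σ̂) ∘ B^{−1/2}‖ ≤ t, then for every v ∈ H, ‖(Σ̂ − Σ) v‖ ≤ √2 · (max(‖Σ‖, ‖Σ‖^{1/2}) + λ^{1−α}) · t · ‖B^{α} v‖, where B^{r} denotes the fractional power of B given by the continuous functional calculus. -/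
/-- Deterministic core of Theorem 3.1(ii): with `B = Σ + λ·1`, if
`‖B^{−1/2}(Σ − Σ̂)B^{−1/2}‖ ≤ t` then for every `v`,
`‖(Σ̂ − Σ)v‖ ≤ √2 (max(‖Σ‖, ‖Σ‖^{1/2}) + λ^{1−α}) t ‖B^α v‖`,
where `B^r = cfc (· ^ r) B` is the fractional power given by the continuous
functional calculus. -/
theorem stmt7 {H : Type*} [NormedAddCommGroup H] [InnerProductSpace ℂ H] [CompleteSpace H]
    (Sig Sighat : H →L[ℂ] H) (hSig : Sig.IsPositive) (hSighat : IsSelfAdjoint Sighat)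
    (lam t α : ℝ) (hlam : 0 < lam) (ht : 0 < t) (hα : α ∈ Set.Icc (0 : ℝ) (1 / 2))
    (B : H →L[ℂ] H) (hB : B = Sig + lam • 1)
    (hnorm : ‖cfc (fun x : ℝ => x ^ (-(1 : ℝ) / 2)) B ∘L (Sig - Sighat) ∘L
        cfc (fun x : ℝ => x ^ (-(1 : ℝ) / 2)) B‖ ≤ t) :
    ∀ v : H, ‖(Sighat - Sig) v‖ ≤
      Real.sqrt 2 * (max ‖Sig‖ (‖Sig‖ ^ ((1 : ℝ) / 2)) + lam ^ (1 - α)) * t *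
        ‖cfc (fun x : ℝ => x ^ α) B v‖ := by
  obtain ⟨hα0, hα2⟩ := hα
  intro v
  rcases subsingleton_or_nontrivial H with hH | hH
  · have hv : v = 0 := Subsingleton.elim v 0
    subst hv
    simp only [map_zero, norm_zero, mul_zero]
    exact le_refl 0
  set a := ‖Sig‖ with ha_def
  have ha0 : 0 ≤ a := norm_nonneg _
  set M : ℝ := a + lam with hM_def
  have hM0 : 0 < M := by positivity
  -- B is self-adjoint
  have hBsa : IsSelfAdjoint B := by
    rw [hB]
    exact hSig.isSelfAdjoint.add (IsSelfAdjoint.smul (star_trivial lam)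
      (IsSelfAdjoint.one (R := H →L[ℂ] H)))
  -- spectrum of B ⊆ [lam, M]
  have hSig0 : (0 : H →L[ℂ] H) ≤ Sig := (ContinuousLinearMap.nonneg_iff_isPositive Sig).mpr hSig
  have hspec : spectrum ℝ B ⊆ Set.Icc lam M := by
    have h1 : B = Sig + algebraMap ℝ (H →L[ℂ] H) lam := by
      rw [hB, Algebra.algebraMap_eq_smul_one]
    rw [h1, ← spectrum.add_singleton_eq]
    rintro x hx
    obtain ⟨y, hy, z, hz, rfl⟩ := Set.mem_add.mp hx
    rw [Set.mem_singleton_iff] at hz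
    subst hz
    have hy0 : 0 ≤ y := spectrum_nonneg_of_nonneg hSig0 hy
    have hya : y ≤ a := le_trans (le_abs_self y) (spectrum.norm_le_norm_of_mem hy)
    exact ⟨by linarith, by linarith⟩
  have hspos : ∀ x ∈ spectrum ℝ B, 0 < x := fun x hx => lt_of_lt_of_le hlam (hspec hx).1
  have hcont : ∀ r : ℝ, ContinuousOn (fun x : ℝ => x ^ r) (spectrum ℝ B) := fun r x hx =>
    (Real.continuousAt_rpow_const x r (Or.inl (ne_of_gt (hspos x hx)))).continuousWithinAt
  -- multiplicativity of fractional powers on B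
  have key : ∀ r s u : ℝ, r + s = u →
      cfc (fun x : ℝ => x ^ r) B * cfc (fun x : ℝ => x ^ s) B = cfc (fun x : ℝ => x ^ u) B := by
    intro r s u hu
    rw [← cfc_mul _ _ B (hcont r) (hcont s)]
    exact cfc_congr fun x hx => by
      rw [← hu, Real.rpow_add (hspos x hx)]
  have hone : cfc (fun x : ℝ => x ^ (0 : ℝ)) B = 1 := by
    rw [show (1 : H →L[ℂ] H) = cfc (1 : ℝ → ℝ) B from (cfc_one ℝ B).symm]
    exact cfc_congr fun x _ => Real.rpow_zero x
  have key' : ∀ r s : ℝ, r + s = 0 → ∀ w : H,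
      cfc (fun x : ℝ => x ^ r) B (cfc (fun x : ℝ => x ^ s) B w) = w := by
    intro r s hu w
    rw [← ContinuousLinearMap.mul_apply, key r s 0 hu, hone, ContinuousLinearMap.one_apply]
  -- notation
  set Bf := cfc (fun x : ℝ => x ^ (-(1 : ℝ) / 2)) B with hBf
  set Bh := cfc (fun x : ℝ => x ^ ((1 : ℝ) / 2)) B with hBh
  set Bq := cfc (fun x : ℝ => x ^ ((1 : ℝ) / 2 - α)) B with hBq
  set Ba := cfc (fun x : ℝ => x ^ α) B with hBa
  set C := Bf ∘L (Sig - Sighat) ∘L Bf with hC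
  set D := Sig - Sighat with hD
  -- reconstruct D v
  have e1 : Bq (Ba v) = Bh v := by
    rw [← ContinuousLinearMap.mul_apply, hBq, hBa, hBh,
      key ((1 : ℝ) / 2 - α) α ((1 : ℝ) / 2) (by ring)]
  have e2 : Bh (C (Bh v)) = D v := by
    have hfh : ∀ w : H, Bf (Bh w) = w := key' (-(1 : ℝ) / 2) ((1 : ℝ) / 2) (by norm_num)
    have hhf : ∀ w : H, Bh (Bf w) = w := key' ((1 : ℝ) / 2) (-(1 : ℝ) / 2) (by norm_num)
    simp only [hC, ContinuousLinearMap.comp_apply, hfh, hhf]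
  -- operator norm bounds for powers of B
  have hnormr : ∀ r : ℝ, 0 ≤ r → ‖cfc (fun x : ℝ => x ^ r) B‖ ≤ M ^ r := by
    intro r hr
    refine norm_cfc_le (Real.rpow_nonneg hM0.le r) fun x hx => ?_
    rw [Real.norm_eq_abs, abs_of_nonneg (Real.rpow_nonneg (hspos x hx).le r)]
    exact Real.rpow_le_rpow (hspos x hx).le (hspec hx).2 hr
  have hBhn : ‖Bh‖ ≤ M ^ ((1 : ℝ) / 2) := hnormr _ (by norm_num)
  have hBqn : ‖Bq‖ ≤ M ^ ((1 : ℝ) / 2 - α) := hnormr _ (by linarith)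
  -- the scalar inequality
  set m : ℝ := max a (a ^ ((1 : ℝ) / 2)) with hm_def
  have hm0 : 0 ≤ m := le_trans ha0 (le_max_left _ _)
  have hsplit : M ^ (1 - α) ≤ a ^ (1 - α) + lam ^ (1 - α) := by
    have h := NNReal.rpow_add_le_add_rpow (p := 1 - α) (⟨a, ha0⟩ : NNReal)
      (⟨lam, hlam.le⟩ : NNReal) (by linarith) (by linarith)
    have h' := NNReal.coe_le_coe.mpr h
    push_cast at h'
    exact h'
  have haux : a ^ (1 - α) ≤ m := by
    rcases eq_or_lt_of_le ha0 with h0 | h0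
    · rw [← h0, Real.zero_rpow (ne_of_gt (show (0:ℝ) < 1 - α by linarith))]
      exact hm0
    · rcases le_or_gt a 1 with h1 | h1
      · exact le_trans (Real.rpow_le_rpow_of_exponent_ge h0 h1 (by linarith))
          (le_max_right _ _)
      · calc a ^ (1 - α) ≤ a ^ (1 : ℝ) :=
              Real.rpow_le_rpow_of_exponent_le h1.le (by linarith)
          _ = a := Real.rpow_one a
          _ ≤ m := le_max_left _ _
  have hsqrt2 : (1 : ℝ) ≤ Real.sqrt 2 := by
    rw [show (1 : ℝ) = Real.sqrt 1 from Real.sqrt_one.symm]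
    exact Real.sqrt_le_sqrt (by norm_num)
  have hfin : M ^ ((1 : ℝ) / 2) * M ^ ((1 : ℝ) / 2 - α) ≤
      Real.sqrt 2 * (m + lam ^ (1 - α)) := by
    have hMe : M ^ ((1 : ℝ) / 2) * M ^ ((1 : ℝ) / 2 - α) = M ^ (1 - α) := by
      rw [← Real.rpow_add hM0]; ring_nf
    rw [hMe]
    have h2 : M ^ (1 - α) ≤ m + lam ^ (1 - α) := le_trans hsplit (by linarith)
    calc M ^ (1 - α) ≤ m + lam ^ (1 - α) := h2
      _ = 1 * (m + lam ^ (1 - α)) := (one_mul _).symm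
      _ ≤ Real.sqrt 2 * (m + lam ^ (1 - α)) := by
          apply mul_le_mul_of_nonneg_right hsqrt2
          positivity
  -- assemble
  have hrw : (Sighat - Sig) v = -(D v) := by
    rw [hD, ← ContinuousLinearMap.neg_apply, neg_sub]
  rw [hrw, norm_neg]
  calc ‖D v‖ = ‖Bh (C (Bq (Ba v)))‖ := by rw [e1, e2]
    _ ≤ ‖Bh‖ * ‖C (Bq (Ba v))‖ := ContinuousLinearMap.le_opNorm _ _
    _ ≤ ‖Bh‖ * (‖C‖ * ‖Bq (Ba v)‖) := by
        apply mul_le_mul_of_nonneg_left (ContinuousLinearMap.le_opNorm _ _) (norm_nonneg _)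
    _ ≤ ‖Bh‖ * (‖C‖ * (‖Bq‖ * ‖Ba v‖)) := by
        apply mul_le_mul_of_nonneg_left
          (mul_le_mul_of_nonneg_left (ContinuousLinearMap.le_opNorm _ _) (norm_nonneg _))
          (norm_nonneg _)
    _ ≤ M ^ ((1 : ℝ) / 2) * (t * (M ^ ((1 : ℝ) / 2 - α) * ‖Ba v‖)) := by
        have hC' : ‖C‖ ≤ t := hnorm
        gcongr <;> positivity
    _ = (M ^ ((1 : ℝ) / 2) * M ^ ((1 : ℝ) / 2 - α)) * t * ‖Ba v‖ := by ring
    _ ≤ Real.sqrt 2 * (m + lam ^ (1 - α)) * t * ‖Ba v‖ := by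
        apply mul_le_mul_of_nonneg_right
          (mul_le_mul_of_nonneg_right hfin ht.le) (norm_nonneg _)
end

section
/- Let (Z, τ) be a measure space with τ a probability measure, let n ∈ ℕ, and let φ : Z → (Fin n → ℝ) be measurable with z ↦ ‖φ(z)‖² integrable with respect to τ. Define the real n×n matrix Σ by Σᵢⱼ = ∫ φ(z)ᵢ · φ(z)ⱼ dτ(z), and let λ > 0. Let q : Z → ℝ be measurable with q ≥ 0 and ∫ q dτ = 1, and suppose c ∈ ℝ satisfies ⟨φ(z), (Σ + λ·1)⁻¹ · φ(z)⟩ ≤ c · q(z) for τ-almost every z. Then trace(Σ * (Σ + λ·1)⁻¹) ≤ c. -/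
open MeasureTheory Matrix

/-!
Integrating the quadratic form `⟨φ, B φ⟩` against `τ` gives `trace (B Σ)` for any matrix `B`,
since `Σ` is the second-moment matrix of `φ`. Integrating the pointwise bound `⟨φ, B φ⟩ ≤ c q`
with `B = (Σ + λ 1)⁻¹` therefore yields `trace (Σ B) ≤ c ∫ q = c`.
-/

namespace Matrix

variable {ι : Type*} [Fintype ι]

theorem dotProduct_mulVec_self_eq_sum (B : Matrix ι ι ℝ) (v : ι → ℝ) :
    v ⬝ᵥ (B *ᵥ v) = ∑ i, ∑ j, B i j * (v i * v j) := by
  simp only [dotProduct, mulVec, Finset.mul_sum]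
  exact Finset.sum_congr rfl fun i _ => Finset.sum_congr rfl fun j _ => by ring

end Matrix

section SecondMoment

variable {Z ι : Type*} [MeasurableSpace Z] [Fintype ι] {μ : Measure Z} {φ : Z → ι → ℝ}

noncomputable def secondMoment (μ : Measure Z) (φ : Z → ι → ℝ) : Matrix ι ι ℝ :=
  Matrix.of fun i j => ∫ z, φ z i * φ z j ∂μ

theorem integrable_apply_mul_apply (hφ : AEStronglyMeasurable φ μ)
    (hint : Integrable (fun z => ‖φ z‖ ^ 2) μ) (i j : ι) :
    Integrable (fun z => φ z i * φ z j) μ := by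
  refine hint.mono (((continuous_apply i).comp_aestronglyMeasurable hφ).mul
    ((continuous_apply j).comp_aestronglyMeasurable hφ)) (Filter.Eventually.of_forall fun z => ?_)
  calc ‖φ z i * φ z j‖ = ‖φ z i‖ * ‖φ z j‖ := norm_mul _ _
    _ ≤ ‖φ z‖ * ‖φ z‖ :=
      mul_le_mul (norm_le_pi_norm _ i) (norm_le_pi_norm _ j) (norm_nonneg _) (norm_nonneg _)
    _ = ‖‖φ z‖ ^ 2‖ := by rw [norm_pow, norm_norm, sq]

theorem integrable_dotProduct_mulVec_self (hφ : AEStronglyMeasurable φ μ)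
    (hint : Integrable (fun z => ‖φ z‖ ^ 2) μ) (B : Matrix ι ι ℝ) :
    Integrable (fun z => φ z ⬝ᵥ (B *ᵥ φ z)) μ := by
  simp only [dotProduct_mulVec_self_eq_sum]
  exact integrable_finsetSum _ fun i _ => integrable_finsetSum _ fun j _ =>
    (integrable_apply_mul_apply hφ hint i j).const_mul _

theorem integral_dotProduct_mulVec_self (hφ : AEStronglyMeasurable φ μ)
    (hint : Integrable (fun z => ‖φ z‖ ^ 2) μ) (B : Matrix ι ι ℝ) :
    ∫ z, φ z ⬝ᵥ (B *ᵥ φ z) ∂μ = (B * secondMoment μ φ).trace := by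
  have hterm := fun i j => (integrable_apply_mul_apply hφ hint i j).const_mul (B i j)
  simp only [dotProduct_mulVec_self_eq_sum]
  rw [integral_finsetSum _ fun i _ => integrable_finsetSum _ fun j _ => hterm i j]
  simp only [integral_finsetSum _ fun j _ => hterm _ j, integral_const_mul, trace, diag_apply,
    mul_apply, secondMoment, of_apply]
  simp_rw [mul_comm (φ _ _) (φ _ _)]

end SecondMoment

theorem stmt11_general {Z : Type*} [MeasurableSpace Z] (τ : Measure Z)
    (n : ℕ) (φ : Z → (Fin n → ℝ)) (hφ : Measurable φ)
    (hint : Integrable (fun z => ‖φ z‖ ^ 2) τ)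
    (S : Matrix (Fin n) (Fin n) ℝ) (hS : ∀ i j, S i j = ∫ z, φ z i * φ z j ∂τ)
    (lam : ℝ)
    (q : Z → ℝ) (hq1 : ∫ z, q z ∂τ = 1)
    (c : ℝ)
    (hc : ∀ᵐ z ∂τ, φ z ⬝ᵥ ((S + lam • (1 : Matrix (Fin n) (Fin n) ℝ))⁻¹ *ᵥ φ z) ≤ c * q z) :
    (S * (S + lam • (1 : Matrix (Fin n) (Fin n) ℝ))⁻¹).trace ≤ c := by
  set B := (S + lam • (1 : Matrix (Fin n) (Fin n) ℝ))⁻¹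
  have hS_eq : S = secondMoment τ φ := Matrix.ext hS
  have hq : Integrable q τ := Integrable.of_integral_ne_zero (by rw [hq1]; exact one_ne_zero)
  calc (S * B).trace = (B * S).trace := trace_mul_comm S B
    _ = ∫ z, φ z ⬝ᵥ (B *ᵥ φ z) ∂τ :=
      by rw [hS_eq, integral_dotProduct_mulVec_self hφ.aestronglyMeasurable hint]
    _ ≤ ∫ z, c * q z ∂τ :=
      integral_mono_ae (integrable_dotProduct_mulVec_self hφ.aestronglyMeasurable hint B)
        (hq.const_mul c) hc
    _ = c := by rw [integral_const_mul, hq1, mul_one]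

/-- Optimality of the degrees of freedom (Section 3.1): for every probability density `q`
with respect to `τ` and every `c` with `⟨φ(z), (Σ+λI)⁻¹ φ(z)⟩ ≤ c·q(z)` a.e.,
we have `trace(Σ(Σ+λI)⁻¹) ≤ c`, i.e. `N_{q,λ} ≥ N*_λ`. -/
theorem stmt11 {Z : Type*} [MeasurableSpace Z] (τ : Measure Z) [IsProbabilityMeasure τ]
    (n : ℕ) (φ : Z → (Fin n → ℝ)) (hφ : Measurable φ)
    (hint : Integrable (fun z => ‖φ z‖ ^ 2) τ)
    (S : Matrix (Fin n) (Fin n) ℝ) (hS : ∀ i j, S i j = ∫ z, φ z i * φ z j ∂τ)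
    (lam : ℝ) (hlam : 0 < lam)
    (q : Z → ℝ) (hq : Measurable q) (hq0 : ∀ z, 0 ≤ q z) (hq1 : ∫ z, q z ∂τ = 1)
    (c : ℝ)
    (hc : ∀ᵐ z ∂τ, φ z ⬝ᵥ ((S + lam • (1 : Matrix (Fin n) (Fin n) ℝ))⁻¹ *ᵥ φ z) ≤ c * q z) :
    (S * (S + lam • (1 : Matrix (Fin n) (Fin n) ℝ))⁻¹).trace ≤ c :=
  stmt11_general τ n φ hφ hint S hS lam q hq1 c hc
end

section
/- Let d ≥ 1 and define, for x, z : Fin d → ℝ, the Positive Random Feature φ(x; z) := exp(⟨z, x⟩/d^{1/4} − ‖x‖²/(2√d)), where ⟨z, x⟩ = ∑ᵢ zᵢxᵢ and ‖x‖² = ∑ᵢ xᵢ². Then for all q, k : Fin d → ℝ, ∫ φ(q; z)·φ(k; z) dγ_d(z) = exp(⟨q, k⟩/√d), where γ_d = Measure.pi (fun _ => gaussianReal 0 1) is the d-dimensional standard Gaussian measure. -/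
/-!
The product of two positive features is `exp ⟨z, a + b⟩` times a constant, and the Gaussian
moment generating function, taken coordinatewise, turns `exp ⟨z, a + b⟩` into
`exp (‖a + b‖² / 2)`; since `‖a + b‖² - ‖a‖² - ‖b‖² = 2 ⟨a, b⟩`, the expectation is
`exp ⟨a, b⟩`. The theorem is the case `a = q / d^{1/4}`, `b = k / d^{1/4}`, as `(d^{1/4})² = √d`.
-/

open MeasureTheory ProbabilityTheory Real

section

variable {ι : Type*} [Fintype ι]

lemma integral_exp_mul_gaussianReal (t : ℝ) :
    ∫ x, exp (t * x) ∂(gaussianReal 0 1) = exp (t ^ 2 / 2) := by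
  simpa [mgf] using congrFun (mgf_id_gaussianReal (μ := 0) (v := 1)) t

lemma integral_exp_sum_mul_stdGaussian (a : ι → ℝ) :
    ∫ z, exp (∑ i, z i * a i) ∂(Measure.pi fun _ : ι => gaussianReal 0 1) =
      exp ((∑ i, a i ^ 2) / 2) := by
  simp_rw [exp_sum, Finset.sum_div, exp_sum]
  rw [integral_fintype_prod_eq_prod (fun i x => exp (x * a i))]
  simp_rw [mul_comm _ (a _), integral_exp_mul_gaussianReal]

/-- The paper's `φ(x; z)` is `positiveFeature (x / d^{1/4}) z`. -/
noncomputable def positiveFeature (x z : ι → ℝ) : ℝ :=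
  exp (∑ i, z i * x i - (∑ i, x i ^ 2) / 2)

lemma positiveFeature_mul (a b z : ι → ℝ) :
    positiveFeature a z * positiveFeature b z =
      exp (∑ i, z i * (a + b) i) * exp (-((∑ i, a i ^ 2) + ∑ i, b i ^ 2) / 2) := by
  simp only [positiveFeature, ← exp_add, Pi.add_apply, mul_add, Finset.sum_add_distrib]
  ring_nf

lemma integral_positiveFeature_mul (a b : ι → ℝ) :
    ∫ z, positiveFeature a z * positiveFeature b z
        ∂(Measure.pi fun _ : ι => gaussianReal 0 1) = exp (∑ i, a i * b i) := by
  simp_rw [positiveFeature_mul]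
  rw [integral_mul_const, integral_exp_sum_mul_stdGaussian, ← exp_add]
  congr 1
  simp only [Pi.add_apply, add_sq, Finset.sum_add_distrib, mul_assoc, ← Finset.mul_sum]
  ring

lemma positiveFeature_div {r s : ℝ} (hrs : r ^ 2 = s) (x z : ι → ℝ) :
    positiveFeature (fun i => x i / r) z =
      exp ((∑ i, z i * x i) / r - (∑ i, x i ^ 2) / (2 * s)) := by
  simp only [positiveFeature, div_pow, hrs, Finset.sum_div, mul_div_assoc, div_div,
    mul_comm s 2]

end

theorem stmt13_general (d : ℕ) (q k : Fin d → ℝ) :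
    ∫ z, (Real.exp ((∑ i, z i * q i) / (d : ℝ) ^ ((1 : ℝ) / 4) -
            (∑ i, (q i) ^ 2) / (2 * Real.sqrt d))) *
          (Real.exp ((∑ i, z i * k i) / (d : ℝ) ^ ((1 : ℝ) / 4) -
            (∑ i, (k i) ^ 2) / (2 * Real.sqrt d)))
        ∂(Measure.pi fun _ : Fin d => gaussianReal 0 1) =
      Real.exp ((∑ i, q i * k i) / Real.sqrt d) := by
  have hr : ((d : ℝ) ^ ((1 : ℝ) / 4)) ^ 2 = Real.sqrt d := by
    rw [sqrt_eq_rpow, ← rpow_mul_natCast (Nat.cast_nonneg d)]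
    norm_num
  simp_rw [← positiveFeature_div hr q, ← positiveFeature_div hr k]
  rw [integral_positiveFeature_mul, Finset.sum_div]
  simp only [div_mul_div_comm, ← sq, hr]

/-- The Positive Random Feature (PRF) identity of Choromanski et al. (Section 2):
with `φ(x; z) = exp(⟨z, x⟩/d^{1/4} − ‖x‖²/(2√d))`, the attention kernel satisfies
`exp(⟨q, k⟩/√d) = E_{z ∼ N(0, I_d)}[φ(q; z) φ(k; z)]`. -/
theorem stmt13 (d : ℕ) (hd : 1 ≤ d) (q k : Fin d → ℝ) :
    ∫ z, (Real.exp ((∑ i, z i * q i) / (d : ℝ) ^ ((1 : ℝ) / 4) -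
            (∑ i, (q i) ^ 2) / (2 * Real.sqrt d))) *
          (Real.exp ((∑ i, z i * k i) / (d : ℝ) ^ ((1 : ℝ) / 4) -
            (∑ i, (k i) ^ 2) / (2 * Real.sqrt d)))
        ∂(Measure.pi fun _ : Fin d => gaussianReal 0 1) =
      Real.exp ((∑ i, q i * k i) / Real.sqrt d) :=
  stmt13_general d q k
end

section
/- Let d, M, L ∈ ℕ, let Φ : (Fin d → ℝ) → (Fin M → ℝ) be any function, let k, v : Fin L → (Fin d → ℝ) be sequences of keys and values, and let qᵢ ∈ Fin d → ℝ be a query. Fix i ∈ Fin L and define A := ∑_{j ≤ i} Φ(k j) ∈ Fin M → ℝ and B := ∑_{j ≤ i} vecMulVec (Φ(k j)) (v j) ∈ Matrix (Fin M) (Fin d) ℝ (the sum of outer products Φ(k j)(v j)ᵀ). If ∑_{j' ≤ i} ⟨Φ(k j'), Φ(qᵢ)⟩ ≠ 0, then ∑_{j ≤ i} (⟨Φ(k j), Φ(qᵢ)⟩ / ∑_{j' ≤ i} ⟨Φ(k j'), Φ(qᵢ)⟩) • v j = (⟨A, Φ(qᵢ)⟩)⁻¹ • (Bᵀ.mulVec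 (Φ(qᵢ))). -/
open Matrix

/-- Closed-form recursion identity of Section 2: linear attention output
`ŷᵢ = ∑_{j≤i} (Φ(kⱼ)ᵀΦ(qᵢ) / ∑_{j'≤i} Φ(k_{j'})ᵀΦ(qᵢ)) vⱼ` equals
`(AᵢᵀΦ(qᵢ))⁻¹ • BᵢᵀΦ(qᵢ)` with `Aᵢ = ∑_{j≤i} Φ(kⱼ)` and
`Bᵢ = ∑_{j≤i} Φ(kⱼ)vⱼᵀ`, enabling linear-time computation. -/
theorem stmt15 (d M L : ℕ) (Φ : (Fin d → ℝ) → (Fin M → ℝ))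
    (k v : Fin L → (Fin d → ℝ)) (qi : Fin d → ℝ) (i : Fin L)
    (A : Fin M → ℝ) (hA : A = ∑ j ∈ Finset.Iic i, Φ (k j))
    (B : Matrix (Fin M) (Fin d) ℝ)
    (hB : B = ∑ j ∈ Finset.Iic i, vecMulVec (Φ (k j)) (v j))
    (hden : ∑ j' ∈ Finset.Iic i, Φ (k j') ⬝ᵥ Φ qi ≠ 0) :
    ∑ j ∈ Finset.Iic i,
        ((Φ (k j) ⬝ᵥ Φ qi) / ∑ j' ∈ Finset.Iic i, Φ (k j') ⬝ᵥ Φ qi) • v j =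
      (A ⬝ᵥ Φ qi)⁻¹ • (Bᵀ.mulVec (Φ qi)) := by
  subst hA hB
  have hA' : (∑ j ∈ Finset.Iic i, Φ (k j)) ⬝ᵥ Φ qi
      = ∑ j ∈ Finset.Iic i, Φ (k j) ⬝ᵥ Φ qi := by
    simp only [dotProduct, Finset.sum_apply, Finset.sum_mul]
    rw [Finset.sum_comm]
  have hB' : (∑ j ∈ Finset.Iic i, vecMulVec (Φ (k j)) (v j))ᵀ.mulVec (Φ qi)
      = ∑ j ∈ Finset.Iic i, (Φ (k j) ⬝ᵥ Φ qi) • v j := by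
    ext x
    simp only [mulVec, dotProduct, transpose_sum, Finset.sum_apply, transpose_apply,
      Matrix.sum_apply, vecMulVec_apply, Finset.sum_mul, Pi.smul_apply, smul_eq_mul]
    rw [Finset.sum_comm]
    exact Finset.sum_congr rfl fun j _ =>
      Finset.sum_congr rfl fun y _ => by ring
  rw [hA', hB', Finset.smul_sum]
  refine Finset.sum_congr rfl fun j _ => ?_
  rw [smul_smul, div_eq_inv_mul]
end
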